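/- arXiv:math/0601757 — 5 statements merged into one kernel-verified Lean document; each statement's English description precedes it below -/
import Mathlib

section
/- Let f be a monotone convex function on an interval I containing 0 with f(0) ≤ 0, let A be an n×n Hermitian matrix with spectrum in I, and let X be an n×n contraction (operator norm ≤ 1). Then there exists a unitary matrix U such that f(X A X*) ≤ U* X f(A) X* U in the Loewner order. -/
open Matrix
open scoped ComplexOrder Kronecker

/-- Functional calculus for Hermitian matrices: apply `f : ℝ → ℝ` to the eigenvalues in a
spectral decomposition (junk value `0` if the matrix is not Hermitian). -/
noncomputable def hermCFC {ι : Type*} [Fintype ι] [DecidableEq ι]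
    (M : Matrix ι ι ℂ) (f : ℝ → ℝ) : Matrix ι ι ℂ :=
  if h : M.IsHermitian then h.cfc f else 0

/-- Eigenvalues of a Hermitian matrix listed in decreasing order:
`eigDesc M j` is the `(j+1)`-th largest eigenvalue (junk value `0` if not Hermitian). -/
noncomputable def eigDesc {n : ℕ} (M : Matrix (Fin n) (Fin n) ℂ) : Fin n → ℝ :=
  if h : M.IsHermitian then fun j => h.eigenvalues (Tuple.sort h.eigenvalues j.rev) else 0

/-- Eigenvalues of a Hermitian matrix listed in increasing order:
`eigAsc M j` is the `(j+1)`-th smallest eigenvalue (junk value `0` if not Hermitian). -/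
noncomputable def eigAsc {n : ℕ} (M : Matrix (Fin n) (Fin n) ℂ) : Fin n → ℝ :=
  if h : M.IsHermitian then fun j => h.eigenvalues (Tuple.sort h.eigenvalues j) else 0

/-- The absolute value `|X| = (XᴴX)^(1/2)` of a matrix. -/
noncomputable def matAbs {n : ℕ} (X : Matrix (Fin n) (Fin n) ℂ) : Matrix (Fin n) (Fin n) ℂ :=
  (Matrix.posSemidef_conjTranspose_mul_self X).1.eigenvectorUnitary.1 *
    diagonal ((↑) ∘ (√·) ∘ (Matrix.posSemidef_conjTranspose_mul_self X).1.eigenvalues) *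
    (star (Matrix.posSemidef_conjTranspose_mul_self X).1.eigenvectorUnitary : Matrix (Fin n) (Fin n) ℂ)

/-- The Loewner order: `X ≤ Y` iff `Y - X` is positive semidefinite. -/
def loewnerLE {n : ℕ} (X Y : Matrix (Fin n) (Fin n) ℂ) : Prop := (Y - X).PosSemidef

/-!
Fix a unit vector `x` and put `y = X* x`, so that `‖y‖ ≤ 1`. In an eigenbasis of `A`,
`⟪x, X A X* x⟫ = ⟪y, A y⟫` is a combination of eigenvalues of `A` with nonnegative weights of total
mass `‖y‖² ≤ 1`; Jensen's inequality, with the missing mass placed at `0` where `f ≤ 0`, gives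
`f ⟪x, X A X* x⟫ ≤ ⟪y, f(A) y⟫ = ⟪x, X f(A) X* x⟫`.

A Courant–Fischer dimension count upgrades this inequality of quadratic forms to the ordered
eigenvalues: the `j`-th smallest eigenvalue of `f(X A X*)` is at most that of `X f(A) X*`.
Monotonicity of `f` enters through quasiconcavity: the superlevel sets `{t ∈ I | c ≤ f t}` are
intervals, so they contain every Rayleigh quotient of a unit vector spanned by eigenvectors of
`X A X*` with `f`-eigenvalue `≥ c`. A unitary matching the two eigenbases turns the eigenvalue
inequality into the Loewner inequality.
-/

open Module Submodule Finset
open scoped InnerProductSpace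

section SubProbability

variable {E : Type*} [AddCommGroup E] [Module ℝ E] {ι : Type*} [Fintype ι]
  {s : Set E} {w : ι → ℝ} {p : ι → E}

-- The missing mass `1 - ∑ i, w i` is put on the point `0`.
theorem sum_option_elim_smul_elim_zero (c : ℝ) :
    ∑ o : Option ι, o.elim c w • o.elim (0 : E) p = ∑ i, w i • p i := by
  simp [Fintype.sum_option]

theorem Convex.sum_mem_of_sum_le_one (hs : Convex ℝ s) (h0 : 0 ∈ s) (hw₀ : ∀ i, 0 ≤ w i)
    (hw₁ : ∑ i, w i ≤ 1) (hp : ∀ i, p i ∈ s) : ∑ i, w i • p i ∈ s := by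
  rw [← sum_option_elim_smul_elim_zero (1 - ∑ i, w i)]
  refine hs.sum_mem (fun o _ => ?_) (by simp [Fintype.sum_option]) fun o _ => ?_
  · cases o <;> simp [hw₁, hw₀]
  · cases o <;> simp [h0, hp]

theorem ConvexOn.map_sum_le_of_sum_le_one {f : E → ℝ} (hf : ConvexOn ℝ s f) (h0 : 0 ∈ s)
    (hf0 : f 0 ≤ 0) (hw₀ : ∀ i, 0 ≤ w i) (hw₁ : ∑ i, w i ≤ 1) (hp : ∀ i, p i ∈ s) :
    f (∑ i, w i • p i) ≤ ∑ i, w i * f (p i) := by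
  have := hf.map_sum_le (t := Finset.univ) (w := fun o : Option ι => o.elim (1 - ∑ i, w i) w)
    (p := fun o : Option ι => o.elim (0 : E) p) (fun o _ => ?_) (by simp [Fintype.sum_option])
    fun o _ => ?_
  · rw [sum_option_elim_smul_elim_zero, Fintype.sum_option] at this
    simp only [Option.elim, smul_eq_mul] at this
    nlinarith [mul_nonpos_of_nonneg_of_nonpos (sub_nonneg.2 hw₁) hf0]
  · cases o <;> simp [hw₁, hw₀]
  · cases o <;> simp [h0, hp]

end SubProbability

namespace OrthonormalBasis

variable {ι 𝕜 E : Type*} [Fintype ι] [RCLike 𝕜] [NormedAddCommGroup E] [InnerProductSpace 𝕜 E]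
  (b : OrthonormalBasis ι 𝕜 E)

theorem sum_sq_norm_inner_right_le_one {y : E} (hy : ‖y‖ ≤ 1) : ∑ i, ‖⟪b i, y⟫_𝕜‖ ^ 2 ≤ 1 := by
  rw [b.sum_sq_norm_inner_right]
  exact pow_le_one₀ (norm_nonneg _) hy

theorem inner_eq_zero_of_mem_span_image {S : Set ι} {x : E} (hx : x ∈ span 𝕜 (b '' S)) {i : ι}
    (hi : i ∉ S) : ⟪b i, x⟫_𝕜 = 0 := by
  rw [← b.repr_apply_apply, ← b.coe_toBasis_repr_apply]
  by_contra h
  rw [← b.coe_toBasis, Basis.mem_span_image] at hx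
  exact hi (hx (Finsupp.mem_support_iff.mpr h))

theorem finrank_span_image (S : Finset ι) : finrank 𝕜 (span 𝕜 (b '' S)) = #S := by
  rw [Set.image_eq_range]
  exact (finrank_span_eq_card (b.orthonormal.linearIndependent.comp _ Subtype.coe_injective)).trans
    (by simp)

end OrthonormalBasis

namespace Matrix.IsHermitian

variable {ι : Type*} [Fintype ι] [DecidableEq ι] {M : Matrix ι ι ℂ} (hM : M.IsHermitian)
include hM

theorem isHermitian_cfc (g : ℝ → ℝ) : (hM.cfc g).IsHermitian :=
  hM.cfc_eq g ▸ cfc_predicate g M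

theorem cfc_id_eq : hM.cfc id = M :=
  (hM.cfc_eq id).symm.trans (cfc_id ℝ M hM)

theorem toEuclideanLin_cfc_eigenvectorBasis (g : ℝ → ℝ) (i : ι) :
    (hM.cfc g).toEuclideanLin (hM.eigenvectorBasis i)
      = (g (hM.eigenvalues i) : ℂ) • hM.eigenvectorBasis i := by
  apply WithLp.ofLp_injective
  rw [toLpLin_apply, WithLp.ofLp_toLp, WithLp.ofLp_smul, IsHermitian.cfc,
    Unitary.conjStarAlgAut_apply, ← mulVec_mulVec, ← mulVec_mulVec,
    star_eigenvectorUnitary_mulVec, diagonal_mulVec_single, ← smul_eq_mul, Pi.single_smul',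
    mulVec_smul, eigenvectorUnitary_mulVec]
  rfl

theorem re_inner_toEuclideanLin_cfc_self (g : ℝ → ℝ) (x : EuclideanSpace ℂ ι) :
    (⟪x, (hM.cfc g).toEuclideanLin x⟫_ℂ).re
      = ∑ i, ‖⟪hM.eigenvectorBasis i, x⟫_ℂ‖ ^ 2 * g (hM.eigenvalues i) := by
  have hsymm := isSymmetric_toEuclideanLin_iff.mpr (hM.isHermitian_cfc g)
  rw [← hM.eigenvectorBasis.sum_inner_mul_inner, Complex.re_sum]
  refine Finset.sum_congr rfl fun i _ => ?_
  rw [← hsymm, hM.toEuclideanLin_cfc_eigenvectorBasis, inner_smul_left, Complex.conj_ofReal,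
    ← inner_conj_symm, mul_left_comm, Complex.conj_mul']
  norm_cast
  ring

theorem re_inner_toEuclideanLin_self (x : EuclideanSpace ℂ ι) :
    (⟪x, M.toEuclideanLin x⟫_ℂ).re
      = ∑ i, ‖⟪hM.eigenvectorBasis i, x⟫_ℂ‖ ^ 2 * hM.eigenvalues i := by
  simpa only [hM.cfc_id_eq, id] using hM.re_inner_toEuclideanLin_cfc_self id x

theorem re_inner_toEuclideanLin_eigenvectorBasis (i : ι) :
    (⟪hM.eigenvectorBasis i, M.toEuclideanLin (hM.eigenvectorBasis i)⟫_ℂ).re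
      = hM.eigenvalues i := by
  have hv := hM.toEuclideanLin_cfc_eigenvectorBasis id i
  rw [hM.cfc_id_eq] at hv
  rw [hv, inner_smul_right, inner_self_eq_norm_sq_to_K, hM.eigenvectorBasis.orthonormal.1 i]
  simp

theorem re_inner_toEuclideanLin_self_mem_convexHull {S : Finset ι} {x : EuclideanSpace ℂ ι}
    (hx : x ∈ span ℂ (hM.eigenvectorBasis '' S)) (hx₁ : ‖x‖ = 1) :
    (⟪x, M.toEuclideanLin x⟫_ℂ).re ∈ convexHull ℝ (hM.eigenvalues '' S) := by
  have hsubset {a : ι → ℝ} : ∑ i ∈ S, ‖⟪hM.eigenvectorBasis i, x⟫_ℂ‖ ^ 2 * a i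
      = ∑ i, ‖⟪hM.eigenvectorBasis i, x⟫_ℂ‖ ^ 2 * a i :=
    Finset.sum_subset S.subset_univ fun i _ hi => by
      simp [hM.eigenvectorBasis.inner_eq_zero_of_mem_span_image hx hi]
  have hparseval := hM.eigenvectorBasis.sum_sq_norm_inner_right x
  rw [hx₁, one_pow] at hparseval
  rw [hM.re_inner_toEuclideanLin_self, ← hsubset]
  refine (convex_convexHull ℝ _).sum_mem (fun _ _ => by positivity) ?_
    fun i hi => subset_convexHull ℝ _ ⟨i, hi, rfl⟩
  simpa [hparseval] using hsubset (a := 1)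

theorem re_inner_toEuclideanLin_self_mem {I : Set ℝ} (hI : Convex ℝ I) (h0 : 0 ∈ I)
    (hMI : ∀ i, hM.eigenvalues i ∈ I) {y : EuclideanSpace ℂ ι} (hy : ‖y‖ ≤ 1) :
    (⟪y, M.toEuclideanLin y⟫_ℂ).re ∈ I := by
  rw [hM.re_inner_toEuclideanLin_self]
  exact hI.sum_mem_of_sum_le_one h0 (fun _ => by positivity)
    (hM.eigenvectorBasis.sum_sq_norm_inner_right_le_one hy) hMI

theorem map_re_inner_toEuclideanLin_self_le {I : Set ℝ} {f : ℝ → ℝ} (hf : ConvexOn ℝ I f)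
    (h0 : 0 ∈ I) (hf0 : f 0 ≤ 0) (hMI : ∀ i, hM.eigenvalues i ∈ I) {y : EuclideanSpace ℂ ι}
    (hy : ‖y‖ ≤ 1) :
    f (⟪y, M.toEuclideanLin y⟫_ℂ).re ≤ (⟪y, (hM.cfc f).toEuclideanLin y⟫_ℂ).re := by
  rw [hM.re_inner_toEuclideanLin_self, hM.re_inner_toEuclideanLin_cfc_self]
  exact hf.map_sum_le_of_sum_le_one h0 hf0 (fun _ => by positivity)
    (hM.eigenvectorBasis.sum_sq_norm_inner_right_le_one hy) hMI

end Matrix.IsHermitian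

theorem LinearMap.norm_adjoint_apply_le {𝕜 E F : Type*} [RCLike 𝕜] [NormedAddCommGroup E]
    [InnerProductSpace 𝕜 E] [FiniteDimensional 𝕜 E] [NormedAddCommGroup F]
    [InnerProductSpace 𝕜 F] [FiniteDimensional 𝕜 F] {T : E →ₗ[𝕜] F}
    (hT : ∀ x, ‖T x‖ ≤ ‖x‖) (y : F) : ‖LinearMap.adjoint T y‖ ≤ ‖y‖ := by
  have hsq : ‖LinearMap.adjoint T y‖ ^ 2 ≤ ‖LinearMap.adjoint T y‖ * ‖y‖ :=
    calc ‖LinearMap.adjoint T y‖ ^ 2 = RCLike.re ⟪T (LinearMap.adjoint T y), y⟫_𝕜 := by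
          rw [← LinearMap.adjoint_inner_right, ← inner_self_eq_norm_sq (𝕜 := 𝕜)]
      _ ≤ ‖T (LinearMap.adjoint T y)‖ * ‖y‖ := re_inner_le_norm _ _
      _ ≤ ‖LinearMap.adjoint T y‖ * ‖y‖ := by gcongr; exact hT _
  nlinarith [norm_nonneg (LinearMap.adjoint T y), norm_nonneg y]

namespace Matrix

variable {m ι : Type*} [Fintype m] [DecidableEq m] [Fintype ι] [DecidableEq ι]

theorem norm_toEuclideanLin_le {X : Matrix m ι ℂ} (hX : (1 - Xᴴ * X).PosSemidef)
    (y : EuclideanSpace ℂ ι) : ‖X.toEuclideanLin y‖ ≤ ‖y‖ := by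
  have h := (isPositive_toEuclideanLin_iff.mpr hX).re_inner_nonneg_left y
  simp only [map_sub, toLpLin_one, toLpLin_mul_same, toEuclideanLin_conjTranspose_eq_adjoint,
    LinearMap.sub_apply, LinearMap.id_apply, LinearMap.comp_apply, inner_sub_left,
    LinearMap.adjoint_inner_left, map_sub] at h
  rw [inner_self_eq_norm_sq, inner_self_eq_norm_sq, sub_nonneg] at h
  exact (pow_le_pow_iff_left₀ (norm_nonneg _) (norm_nonneg _) two_ne_zero).mp h

theorem norm_toEuclideanLin_conjTranspose_le {X : Matrix m ι ℂ} (hX : (1 - Xᴴ * X).PosSemidef)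
    (x : EuclideanSpace ℂ m) : ‖Xᴴ.toEuclideanLin x‖ ≤ ‖x‖ := by
  rw [toEuclideanLin_conjTranspose_eq_adjoint]
  exact LinearMap.norm_adjoint_apply_le (norm_toEuclideanLin_le hX) x

theorem inner_toEuclideanLin_mul_mul_conjTranspose (X : Matrix m ι ℂ) (N : Matrix ι ι ℂ)
    (x : EuclideanSpace ℂ m) :
    ⟪x, (X * N * Xᴴ).toEuclideanLin x⟫_ℂ
      = ⟪Xᴴ.toEuclideanLin x, N.toEuclideanLin (Xᴴ.toEuclideanLin x)⟫_ℂ := by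
  simp only [toLpLin_mul_same, LinearMap.comp_apply, toEuclideanLin_conjTranspose_eq_adjoint,
    LinearMap.adjoint_inner_left]

end Matrix

namespace Tuple

variable {n : ℕ} {α : Type*} [LinearOrder α]

theorem sub_le_card_filter_apply_sort_le (f : Fin n → α) (j : Fin n) :
    n - j ≤ #{i | f (sort f j) ≤ f i} := by
  calc n - j = #((Ici j).image (sort f)) := by
        rw [card_image_of_injective _ (sort f).injective, Fin.card_Ici]
    _ ≤ _ := card_le_card fun i hi => by
        obtain ⟨k, hk, rfl⟩ := mem_image.mp hi
        exact mem_filter.mpr ⟨mem_univ _, monotone_sort f (mem_Ici.mp hk)⟩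

theorem add_one_le_card_filter_le_apply_sort (f : Fin n → α) (j : Fin n) :
    j + 1 ≤ #{i | f i ≤ f (sort f j)} := by
  calc j + 1 = #((Iic j).image (sort f)) := by
        rw [card_image_of_injective _ (sort f).injective, Fin.card_Iic]
    _ ≤ _ := card_le_card fun i hi => by
        obtain ⟨k, hk, rfl⟩ := mem_image.mp hi
        exact mem_filter.mpr ⟨mem_univ _, monotone_sort f (mem_Iic.mp hk)⟩

theorem exists_perm_le_of_apply_sort_le {d e : Fin n → α}
    (h : ∀ j, d (sort d j) ≤ e (sort e j)) : ∃ ρ : Equiv.Perm (Fin n), ∀ i, d i ≤ e (ρ i) :=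
  ⟨(sort d)⁻¹.trans (sort e), fun i => by
    simpa using h ((sort d)⁻¹ i)⟩

end Tuple

theorem Submodule.exists_norm_eq_one_mem_inf {𝕜 E : Type*} [RCLike 𝕜] [NormedAddCommGroup E]
    [NormedSpace 𝕜 E] [FiniteDimensional 𝕜 E] {V W : Submodule 𝕜 E}
    (h : finrank 𝕜 E < finrank 𝕜 V + finrank 𝕜 W) : ∃ x, ‖x‖ = 1 ∧ x ∈ V ⊓ W := by
  have hinf : V ⊓ W ≠ ⊥ := by
    intro hbot
    have := finrank_sup_add_finrank_inf_eq V W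
    rw [hbot, finrank_bot] at this
    linarith [(V ⊔ W).finrank_le]
  obtain ⟨x, hx, hx0⟩ := exists_mem_ne_zero_of_ne_bot hinf
  exact ⟨(‖x‖⁻¹ : 𝕜) • x, norm_smul_inv_norm hx0, smul_mem _ _ hx⟩

namespace Matrix.IsHermitian

variable {n : ℕ} {B C : Matrix (Fin n) (Fin n) ℂ}

theorem exists_perm_le_eigenvalues (hC : C.IsHermitian)
    (b : OrthonormalBasis (Fin n) ℂ (EuclideanSpace ℂ (Fin n))) (ν : Fin n → ℝ)
    (h : ∀ (c : ℝ) (S : Finset (Fin n)), (∀ i ∈ S, c ≤ ν i) → ∀ x, ‖x‖ = 1 →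
      x ∈ span ℂ (b '' S) → c ≤ (⟪x, C.toEuclideanLin x⟫_ℂ).re) :
    ∃ ρ : Equiv.Perm (Fin n), ∀ i, ν i ≤ hC.eigenvalues (ρ i) := by
  refine Tuple.exists_perm_le_of_apply_sort_le fun j => ?_
  set μ := hC.eigenvalues
  set S : Finset (Fin n) := {i | ν (Tuple.sort ν j) ≤ ν i}
  set T : Finset (Fin n) := {i | μ i ≤ μ (Tuple.sort μ j)}
  obtain ⟨x, hx₁, hxS, hxT⟩ := exists_norm_eq_one_mem_inf
    (V := span ℂ (b '' S)) (W := span ℂ (hC.eigenvectorBasis '' T)) <| by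
      rw [b.finrank_span_image, hC.eigenvectorBasis.finrank_span_image, finrank_euclideanSpace_fin]
      have hS : n - j ≤ #S := Tuple.sub_le_card_filter_apply_sort_le ν j
      have hT : j + 1 ≤ #T := Tuple.add_one_le_card_filter_le_apply_sort μ j
      omega
  have hT : μ '' T ⊆ Set.Iic (μ (Tuple.sort μ j)) := by
    rintro _ ⟨i, hi, rfl⟩
    exact (mem_filter.mp hi).2
  calc ν (Tuple.sort ν j) ≤ (⟪x, C.toEuclideanLin x⟫_ℂ).re :=
        h _ S (fun i hi => (mem_filter.mp hi).2) x hx₁ hxS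
    _ ≤ μ (Tuple.sort μ j) :=
        convexHull_min hT (convex_Iic _) (hC.re_inner_toEuclideanLin_self_mem_convexHull hxT hx₁)

theorem exists_perm_map_eigenvalues_le (hB : B.IsHermitian) (hC : C.IsHermitian) {I : Set ℝ}
    {g : ℝ → ℝ} (hg : QuasiconcaveOn ℝ I g)
    (h : ∀ x, ‖x‖ = 1 → (⟪x, B.toEuclideanLin x⟫_ℂ).re ∈ I ∧
      g (⟪x, B.toEuclideanLin x⟫_ℂ).re ≤ (⟪x, C.toEuclideanLin x⟫_ℂ).re) :
    ∃ ρ : Equiv.Perm (Fin n), ∀ i, g (hB.eigenvalues i) ≤ hC.eigenvalues (ρ i) := by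
  have hBI (i : Fin n) : hB.eigenvalues i ∈ I := by
    simpa only [hB.re_inner_toEuclideanLin_eigenvectorBasis] using
      (h _ (hB.eigenvectorBasis.orthonormal.1 i)).1
  refine hC.exists_perm_le_eigenvalues hB.eigenvectorBasis _ fun c S hS x hx₁ hxS => ?_
  have hsub : convexHull ℝ (hB.eigenvalues '' S) ⊆ {t | t ∈ I ∧ c ≤ g t} := by
    refine convexHull_min ?_ (hg c)
    rintro _ ⟨i, hi, rfl⟩
    exact ⟨hBI i, hS i hi⟩
  exact (hsub (hB.re_inner_toEuclideanLin_self_mem_convexHull hxS hx₁)).2.trans (h x hx₁).2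

end Matrix.IsHermitian

namespace Matrix

variable {ι : Type*} [Fintype ι] [DecidableEq ι]

theorem submatrix_id_mem_unitaryGroup {W : Matrix ι ι ℂ} (hW : W ∈ unitaryGroup ι ℂ)
    (ρ : Equiv.Perm ι) : W.submatrix id ρ ∈ unitaryGroup ι ℂ := by
  rw [mem_unitaryGroup_iff', star_eq_conjTranspose, conjTranspose_submatrix,
    ← Equiv.coe_refl, submatrix_mul_equiv, ← star_eq_conjTranspose,
    mem_unitaryGroup_iff'.mp hW, submatrix_one_equiv]

theorem submatrix_id_mul_diagonal_mul_conjTranspose (W : Matrix ι ι ℂ) (ρ : Equiv.Perm ι)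
    (c : ι → ℂ) :
    W.submatrix id ρ * diagonal (c ∘ ρ) * (W.submatrix id ρ)ᴴ = W * diagonal c * Wᴴ := by
  rw [conjTranspose_submatrix, ← submatrix_diagonal_equiv, submatrix_mul_equiv,
    submatrix_mul_equiv]
  rfl

theorem posSemidef_conj_diagonal_sub {V W : Matrix ι ι ℂ} (hW : W ∈ unitaryGroup ι ℂ)
    {d e : ι → ℝ} (h : ∀ i, d i ≤ e i) :
    ((W * Vᴴ)ᴴ * (W * diagonal (Complex.ofReal ∘ e) * Wᴴ) * (W * Vᴴ)
      - V * diagonal (Complex.ofReal ∘ d) * Vᴴ).PosSemidef := by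
  have hWW : Wᴴ * W = 1 := mem_unitaryGroup_iff'.mp hW
  have hconj : (W * Vᴴ)ᴴ * (W * diagonal (Complex.ofReal ∘ e) * Wᴴ) * (W * Vᴴ)
      = V * diagonal (Complex.ofReal ∘ e) * Vᴴ := by
    simp only [conjTranspose_mul, conjTranspose_conjTranspose, Matrix.mul_assoc]
    rw [← Matrix.mul_assoc Wᴴ W, hWW, Matrix.one_mul, ← Matrix.mul_assoc Wᴴ W, hWW,
      Matrix.one_mul]
  rw [hconj, ← Matrix.sub_mul, ← Matrix.mul_sub, diagonal_sub]
  refine (posSemidef_diagonal_iff.mpr fun i => ?_).mul_mul_conjTranspose_same V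
  simpa using h i

theorem exists_unitary_posSemidef_conj_diagonal_sub {V W : Matrix ι ι ℂ}
    (hV : V ∈ unitaryGroup ι ℂ) (hW : W ∈ unitaryGroup ι ℂ) {d e : ι → ℝ} {ρ : Equiv.Perm ι}
    (h : ∀ i, d i ≤ e (ρ i)) :
    ∃ U ∈ unitaryGroup ι ℂ, (Uᴴ * (W * diagonal (Complex.ofReal ∘ e) * Wᴴ) * U
      - V * diagonal (Complex.ofReal ∘ d) * Vᴴ).PosSemidef := by
  have hW' := submatrix_id_mem_unitaryGroup hW ρ
  refine ⟨W.submatrix id ρ * Vᴴ, mul_mem hW' (Unitary.star_mem hV), ?_⟩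
  rw [← submatrix_id_mul_diagonal_mul_conjTranspose W ρ]
  exact posSemidef_conj_diagonal_sub hW' (e := e ∘ ρ) h

end Matrix

theorem stmt3_general {n : ℕ} (I : Set ℝ) (h0I : (0 : ℝ) ∈ I)
    (f : ℝ → ℝ) (hmono : MonotoneOn f I ∨ AntitoneOn f I) (hconv : ConvexOn ℝ I f)
    (hf0 : f 0 ≤ 0)
    (A : Matrix (Fin n) (Fin n) ℂ) (hA : A.IsHermitian) (hspec : ∀ i, hA.eigenvalues i ∈ I)
    (X : Matrix (Fin n) (Fin n) ℂ) (hX : (1 - Xᴴ * X).PosSemidef) :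
    ∃ U ∈ Matrix.unitaryGroup (Fin n) ℂ,
      loewnerLE (hermCFC (X * A * Xᴴ) f) (Uᴴ * X * hermCFC A f * Xᴴ * U) := by
  have hB : (X * A * Xᴴ).IsHermitian := isHermitian_mul_mul_conjTranspose X hA
  have hC : (X * hA.cfc f * Xᴴ).IsHermitian :=
    isHermitian_mul_mul_conjTranspose X (hA.isHermitian_cfc f)
  have hjensen (x : EuclideanSpace ℂ (Fin n)) (hx : ‖x‖ = 1) :
      (⟪x, (X * A * Xᴴ).toEuclideanLin x⟫_ℂ).re ∈ I ∧
        f (⟪x, (X * A * Xᴴ).toEuclideanLin x⟫_ℂ).re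
          ≤ (⟪x, (X * hA.cfc f * Xᴴ).toEuclideanLin x⟫_ℂ).re := by
    have hy := (norm_toEuclideanLin_conjTranspose_le hX x).trans_eq hx
    rw [inner_toEuclideanLin_mul_mul_conjTranspose, inner_toEuclideanLin_mul_mul_conjTranspose]
    exact ⟨hA.re_inner_toEuclideanLin_self_mem hconv.1 h0I hspec hy,
      hA.map_re_inner_toEuclideanLin_self_le hconv h0I hf0 hspec hy⟩
  have hquasi : QuasiconcaveOn ℝ I f :=
    ((quasilinearOn_iff_monotoneOn_or_antitoneOn hconv.1).mpr hmono).2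
  obtain ⟨ρ, hρ⟩ := hB.exists_perm_map_eigenvalues_le hC hquasi hjensen
  obtain ⟨U, hU, hpsd⟩ := exists_unitary_posSemidef_conj_diagonal_sub
    hB.eigenvectorUnitary.2 hC.eigenvectorUnitary.2 hρ
  refine ⟨U, hU, ?_⟩
  rw [loewnerLE, hermCFC, hermCFC, dif_pos hB, dif_pos hA, Matrix.mul_assoc Uᴴ,
    Matrix.mul_assoc Uᴴ]
  convert hpsd using 4
  · exact hC.spectral_theorem
  · rfl

/-- For a monotone convex `f` on an interval `I ∋ 0` with `f 0 ≤ 0`, a Hermitian `A` with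
spectrum in `I`, and a contraction `X`, there is a unitary `U` with
`f(X A X*) ≤ U* X f(A) X* U` in the Loewner order. -/
theorem stmt3 {n : ℕ} (I : Set ℝ) (hI : Convex ℝ I) (h0I : (0 : ℝ) ∈ I)
    (f : ℝ → ℝ) (hmono : MonotoneOn f I ∨ AntitoneOn f I) (hconv : ConvexOn ℝ I f)
    (hf0 : f 0 ≤ 0)
    (A : Matrix (Fin n) (Fin n) ℂ) (hA : A.IsHermitian) (hspec : ∀ i, hA.eigenvalues i ∈ I)
    (X : Matrix (Fin n) (Fin n) ℂ) (hX : (1 - Xᴴ * X).PosSemidef) :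
    ∃ U ∈ Matrix.unitaryGroup (Fin n) ℂ,
      loewnerLE (hermCFC (X * A * Xᴴ) f) (Uᴴ * X * hermCFC A f * Xᴴ * U) :=
  stmt3_general I h0I f hmono hconv hf0 A hA hspec X hX
end

section
/- There exist 2×2 positive semidefinite matrices A and B such that for every unitary matrix U, the inequality U A² U* + U B² U* ≤ (A+B)² fails in the Loewner order. Specifically one can take A = [[1,0],[0,0]] and B = [[1/2,1/2],[1/2,1/2]]. -/
open Matrix
open scoped ComplexOrder Kronecker

/-! Both `A` and `B` are orthogonal projections, so `A² + B² = A + B`, and `A + B - I/4` is a Gram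
matrix, i.e. `I/4 ≤ A + B`. This lower bound survives unitary conjugation, so the inequality would
force `I/4 ≤ (A + B)²`. But the quadratic form of `(A + B)² = [[5/2, 1], [1, 1/2]]` at
`v = (1, -2)` is `1/2 < 5/4 = |v|²/4`. -/

section Loewner

variable {n : ℕ}

theorem loewnerLE_trans {X Y Z : Matrix (Fin n) (Fin n) ℂ}
    (hXY : loewnerLE X Y) (hYZ : loewnerLE Y Z) : loewnerLE X Z := by
  unfold loewnerLE at *
  simpa using hXY.add hYZ

theorem loewnerLE_mul_mul_conjTranspose {X Y : Matrix (Fin n) (Fin n) ℂ} (h : loewnerLE X Y)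
    (U : Matrix (Fin n) (Fin n) ℂ) : loewnerLE (U * X * Uᴴ) (U * Y * Uᴴ) := by
  unfold loewnerLE at *
  simpa [Matrix.mul_sub, Matrix.sub_mul] using h.mul_mul_conjTranspose_same U

theorem loewnerLE_smul_one_unitary_conj {c : ℝ} {X : Matrix (Fin n) (Fin n) ℂ}
    (h : loewnerLE (c • 1) X) {U : Matrix (Fin n) (Fin n) ℂ}
    (hU : U ∈ unitaryGroup (Fin n) ℂ) : loewnerLE (c • 1) (U * X * Uᴴ) := by
  have hUU : U * Uᴴ = 1 := mem_unitaryGroup_iff.mp hU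
  simpa [hUU] using loewnerLE_mul_mul_conjTranspose h U

end Loewner

theorem Matrix.posSemidef_of_isHermitian_of_isIdempotentElem {m : Type*} [Fintype m]
    {P : Matrix m m ℂ} (hP : P.IsHermitian) (hPP : IsIdempotentElem P) : P.PosSemidef := by
  have : P * Pᴴ = P := by rw [hP.eq, hPP.eq]
  simpa [this] using posSemidef_self_mul_conjTranspose P

local notation "𝐀" => (!![1, 0; 0, 0] : Matrix (Fin 2) (Fin 2) ℂ)
local notation "𝐁" => (!![1/2, 1/2; 1/2, 1/2] : Matrix (Fin 2) (Fin 2) ℂ)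

theorem isHermitian_A : 𝐀.IsHermitian := by
  ext i j; fin_cases i <;> fin_cases j <;> simp

theorem isHermitian_B : 𝐁.IsHermitian := by
  ext i j; fin_cases i <;> fin_cases j <;> simp

theorem isIdempotentElem_A : IsIdempotentElem 𝐀 := by
  ext i j; fin_cases i <;> fin_cases j <;> simp

theorem isIdempotentElem_B : IsIdempotentElem 𝐁 := by
  ext i j; fin_cases i <;> fin_cases j <;> simp <;> norm_num

theorem quarter_smul_one_le_A_add_B : loewnerLE ((1/4 : ℝ) • 1) (𝐀 + 𝐁) := by
  have h : 𝐀 + 𝐁 - (1/4 : ℝ) • 1 = !![1, 1/2; 1/2, 0] * (!![1, 1/2; 1/2, 0])ᴴ := by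
    ext i j; fin_cases i <;> fin_cases j <;> simp [vecMul, dotProduct, map_ofNat] <;> norm_num
  rw [loewnerLE, h]
  exact posSemidef_self_mul_conjTranspose _

theorem not_quarter_smul_one_le_A_add_B_sq : ¬ loewnerLE ((1/4 : ℝ) • 1) ((𝐀 + 𝐁) ^ 2) := by
  intro h
  have := h.dotProduct_mulVec_nonneg ![1, -2]
  norm_num [dotProduct, mulVec, Fin.sum_univ_two, sq, Complex.le_def] at this

/-- There are 2×2 positive semidefinite matrices `A, B` (explicitly,
`A = [[1,0],[0,0]]`, `B = [[1/2,1/2],[1/2,1/2]]`) such that for every unitary `U`,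
`U A² U* + U B² U* ≤ (A+B)²` fails in the Loewner order. -/
theorem stmt5 :
    ∃ A B : Matrix (Fin 2) (Fin 2) ℂ,
      A.PosSemidef ∧ B.PosSemidef ∧
      A = !![1, 0; 0, 0] ∧ B = !![1/2, 1/2; 1/2, 1/2] ∧
      ∀ U ∈ Matrix.unitaryGroup (Fin 2) ℂ,
        ¬ loewnerLE (U * A ^ 2 * Uᴴ + U * B ^ 2 * Uᴴ) ((A + B) ^ 2) := by
  refine ⟨𝐀, 𝐁, posSemidef_of_isHermitian_of_isIdempotentElem isHermitian_A isIdempotentElem_A,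
    posSemidef_of_isHermitian_of_isIdempotentElem isHermitian_B isIdempotentElem_B, rfl, rfl,
    fun U hU h => ?_⟩
  have hsq : U * 𝐀 ^ 2 * Uᴴ + U * 𝐁 ^ 2 * Uᴴ = U * (𝐀 + 𝐁) * Uᴴ := by
    rw [sq, sq, isIdempotentElem_A.eq, isIdempotentElem_B.eq, Matrix.mul_add, Matrix.add_mul]
  rw [hsq] at h
  have hconj := loewnerLE_smul_one_unitary_conj quarter_smul_one_le_A_add_B hU
  exact not_quarter_smul_one_le_A_add_B_sq (loewnerLE_trans hconj h)
end

section
/- Let f be a monotone convex function on an interval I, let Φ : M_m(ℂ) → M_n(ℂ) be a positive unital linear map, and let A be an m×m Hermitian matrix with spectrum in I. Then for every 1 ≤ j ≤ n, the j-th largest eigenvalue of f(Φ(A)) is at most the j-th largest eigenvalue of Φ(f(A)). Equivalently, there is a unitary U with f(Φ(A)) ≤ U Φ(f(A)) U*. -/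
open Matrix
open scoped ComplexOrder Kronecker

/-!
Write `B = Φ A`. Since `Φ` is positive and unital, `λ_min(A) ≤ B ≤ λ_max(A)`, so the eigenvalues
of `B` lie in `I`. Fix `k` and let `t` be the eigenvalue of `B` that produces the `k`-th eigenvalue
of `f(B)` (the `k`-th one of `B` if `f` increases, the `k`-th from the other end if it decreases).
Convexity gives an affine `L` with `L t = f t` and `L ≤ f` on the spectrum of `A`, whose slope
has the sign of the monotonicity of `f`. Then `L(B) = Φ(L(A)) ≤ Φ(f(A))`, and Weyl's monotonicity
principle gives `f t = λₖ(L(B)) ≤ λₖ(Φ(f(A)))`. A unitary that carries the sorted eigenbasis of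
`Φ(f(A))` to that of `f(B)` turns this comparison of eigenvalues into the Loewner inequality.
-/

open scoped MatrixOrder
open Unitary

lemma add_mul_sub_le_of_slope {f : ℝ → ℝ} {t z s : ℝ}
    (hright : t < z → s ≤ slope f t z) (hleft : z < t → slope f t z ≤ s) :
    f t + s * (z - t) ≤ f z := by
  rcases lt_trichotomy z t with hzt | rfl | htz
  · have := (div_le_iff_of_neg (sub_neg.2 hzt)).1 (slope_def_field f t z ▸ hleft hzt)
    linarith
  · simp
  · have := (le_div_iff₀ (sub_pos.2 htz)).1 (slope_def_field f t z ▸ hright htz)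
    linarith

/-- At an endpoint of `I` a convex function need not have a supporting line, so the affine minorant
is only required to lie below `f` at finitely many points. -/
theorem ConvexOn.exists_slope_support {ι : Type*} [Fintype ι] {I : Set ℝ} {f : ℝ → ℝ}
    (hf : ConvexOn ℝ I f) {t : ℝ} (ht : t ∈ I) {x : ι → ℝ} (hx : ∀ i, x i ∈ I) :
    ∃ y ∈ I, ∀ i, f t + slope f t y * (x i - t) ≤ f (x i) := by
  classical
  by_cases h : ∃ i, x i ≠ t
  · obtain ⟨i, hi, hmin⟩ := Finset.exists_min_image {j | x j ≠ t} (fun j => |x j - t|)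
      (by simpa [Finset.Nonempty] using h)
    simp only [Finset.mem_filter, Finset.mem_univ, true_and] at hi hmin
    -- `x i` is nearest to `t`, so no `x j` lies strictly between `t` and `x i`.
    refine ⟨x i, hx i, fun j => add_mul_sub_le_of_slope (fun htj => ?_) (fun hjt => ?_)⟩
    · refine hf.slope_mono ht ⟨hx i, hi⟩ ⟨hx j, htj.ne'⟩ ?_
      have := hmin j htj.ne'
      cases abs_cases (x i - t) <;> cases abs_cases (x j - t) <;> linarith
    · refine hf.slope_mono ht ⟨hx j, hjt.ne⟩ ⟨hx i, hi⟩ ?_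
      have := hmin j hjt.ne
      cases abs_cases (x i - t) <;> cases abs_cases (x j - t) <;> linarith
  · push Not at h
    exact ⟨t, ht, fun i => by simp [h i]⟩

noncomputable def sortAsc {n : ℕ} (d : Fin n → ℝ) : Fin n → ℝ := d ∘ Tuple.sort d

section SortAsc

variable {n : ℕ}

theorem sortAsc_comp_of_monotoneOn {S : Set ℝ} {g : ℝ → ℝ} (hg : MonotoneOn g S)
    {d : Fin n → ℝ} (hd : ∀ i, d i ∈ S) (k : Fin n) :
    sortAsc (g ∘ d) k = g (sortAsc d k) := by
  have h : Monotone ((g ∘ d) ∘ Tuple.sort d) := fun i j hij =>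
    hg (hd _) (hd _) (Tuple.monotone_sort d hij)
  exact (congrFun (Tuple.comp_sort_eq_comp_iff_monotone.2 h) k).symm

theorem sortAsc_comp_of_antitoneOn {S : Set ℝ} {g : ℝ → ℝ} (hg : AntitoneOn g S)
    {d : Fin n → ℝ} (hd : ∀ i, d i ∈ S) (k : Fin n) :
    sortAsc (g ∘ d) k = g (sortAsc d k.rev) := by
  have h : Monotone ((g ∘ d) ∘ (Fin.revPerm.trans (Tuple.sort d))) := fun i j hij =>
    hg (hd _) (hd _) (Tuple.monotone_sort d (Fin.rev_le_rev.2 hij))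
  exact (congrFun (Tuple.comp_sort_eq_comp_iff_monotone.2 h) k).symm

theorem sortAsc_mul_sum_le {p w : Fin n → ℝ} (hw : 0 ≤ w) {k : Fin n}
    (h : ∀ j < k, w (Tuple.sort p j) = 0) : sortAsc p k * ∑ i, w i ≤ ∑ i, p i * w i := by
  rw [Finset.mul_sum, ← Equiv.sum_comp (Tuple.sort p) (fun i => p i * w i),
    ← Equiv.sum_comp (Tuple.sort p) (fun i => sortAsc p k * w i)]
  refine Finset.sum_le_sum fun j _ => ?_
  rcases lt_or_ge j k with hj | hj
  · simp [h j hj]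
  · exact mul_le_mul_of_nonneg_right (Tuple.monotone_sort p hj) (hw _)

theorem sum_mul_le_sortAsc_mul_sum {q w : Fin n → ℝ} (hw : 0 ≤ w) {k : Fin n}
    (h : ∀ j, k < j → w (Tuple.sort q j) = 0) : ∑ i, q i * w i ≤ sortAsc q k * ∑ i, w i := by
  rw [Finset.mul_sum, ← Equiv.sum_comp (Tuple.sort q) (fun i => q i * w i),
    ← Equiv.sum_comp (Tuple.sort q) (fun i => sortAsc q k * w i)]
  refine Finset.sum_le_sum fun j _ => ?_
  rcases le_or_gt j k with hj | hj
  · exact mul_le_mul_of_nonneg_right (Tuple.monotone_sort q hj) (hw _)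
  · simp [h j hj]

end SortAsc

namespace Matrix

variable {𝕜 ι κ : Type*} [RCLike 𝕜]

theorem exists_ne_zero_mulVec_eq_zero [Fintype ι] (A B : Matrix ι ι 𝕜) (s t : Finset ι)
    (h : s.card + t.card < Fintype.card ι) :
    ∃ x ≠ 0, (∀ i ∈ s, (A *ᵥ x) i = 0) ∧ ∀ i ∈ t, (B *ᵥ x) i = 0 := by
  let F : (ι → 𝕜) →ₗ[𝕜] (s → 𝕜) × (t → 𝕜) :=
    (LinearMap.funLeft 𝕜 𝕜 Subtype.val ∘ₗ A.mulVecLin).prod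
      (LinearMap.funLeft 𝕜 𝕜 Subtype.val ∘ₗ B.mulVecLin)
  have hdim : Module.finrank 𝕜 ((s → 𝕜) × (t → 𝕜)) < Module.finrank 𝕜 (ι → 𝕜) := by
    simpa [Module.finrank_prod] using h
  obtain ⟨x, hx, hx0⟩ :=
    (Submodule.ne_bot_iff _).1 (LinearMap.ker_ne_bot_of_finrank_lt (f := F) hdim)
  simp only [LinearMap.ker_prod, Submodule.mem_inf, LinearMap.mem_ker, LinearMap.coe_comp,
    Function.comp_apply, mulVecBilin_apply, funext_iff, LinearMap.funLeft_apply, Pi.zero_apply,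
    Subtype.forall, F] at hx
  exact ⟨x, hx0, hx⟩

theorem monotone_of_map_posSemidef [Fintype ι] [Fintype κ] {Φ : Matrix ι ι 𝕜 →ₗ[𝕜] Matrix κ κ 𝕜}
    (hΦ : ∀ X, X.PosSemidef → (Φ X).PosSemidef) : Monotone Φ :=
  fun X Y h => by rw [le_iff, ← map_sub]; exact hΦ _ h

theorem nonempty_of_map_one [DecidableEq ι] [DecidableEq κ]
    {Φ : Matrix ι ι 𝕜 →ₗ[𝕜] Matrix κ κ 𝕜} (hΦ1 : Φ 1 = 1) (i : κ) : Nonempty ι := by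
  by_contra h
  rw [not_nonempty_iff] at h
  have := congrFun (congrFun hΦ1 i) i
  rw [Subsingleton.elim (1 : Matrix ι ι 𝕜) 0, map_zero] at this
  simp at this

variable [Fintype ι] [DecidableEq ι]

/-- `U diag(d) Uᴴ`, written as `IsHermitian.cfc` and `IsHermitian.spectral_theorem` write it. -/
noncomputable def conjDiagonal (U : unitaryGroup ι 𝕜) (d : ι → ℝ) : Matrix ι ι 𝕜 :=
  conjStarAlgAut 𝕜 _ U (diagonal (RCLike.ofReal ∘ d))

theorem conjDiagonal_sub (U : unitaryGroup ι 𝕜) (p q : ι → ℝ) :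
    conjDiagonal U (p - q) = conjDiagonal U p - conjDiagonal U q := by
  simp only [conjDiagonal, ← map_sub, diagonal_sub]
  congr 2; ext i; simp

theorem conjDiagonal_mono (U : unitaryGroup ι 𝕜) {p q : ι → ℝ} (h : p ≤ q) :
    conjDiagonal U p ≤ conjDiagonal U q := by
  rw [le_iff, ← conjDiagonal_sub, conjDiagonal, conjStarAlgAut_apply, star_eq_conjTranspose]
  exact (posSemidef_diagonal_iff.2 fun i => by simpa using h i).mul_mul_conjTranspose_same _

theorem star_dotProduct_conjDiagonal_mulVec (U : unitaryGroup ι 𝕜) (d : ι → ℝ) (x : ι → 𝕜) :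
    star x ⬝ᵥ (conjDiagonal U d *ᵥ x) =
      ((∑ i, d i * ‖(star (U : Matrix ι ι 𝕜) *ᵥ x) i‖ ^ 2 : ℝ) : 𝕜) := by
  have hstar : star x ᵥ* (U : Matrix ι ι 𝕜) = star (star (U : Matrix ι ι 𝕜) *ᵥ x) := by
    rw [star_mulVec, ← star_eq_conjTranspose, star_star]
  rw [conjDiagonal, conjStarAlgAut_apply, ← mulVec_mulVec, ← mulVec_mulVec, dotProduct_mulVec,
    hstar]
  generalize star (U : Matrix ι ι 𝕜) *ᵥ x = y
  simp only [dotProduct, mulVec_diagonal, Pi.star_apply, RCLike.star_def, Function.comp_apply]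
  push_cast
  refine Finset.sum_congr rfl fun i _ => ?_
  rw [← RCLike.conj_mul]; ring

theorem star_dotProduct_self_eq_sum_norm_sq (U : unitaryGroup ι 𝕜) (x : ι → 𝕜) :
    star x ⬝ᵥ x = ((∑ i, ‖(star (U : Matrix ι ι 𝕜) *ᵥ x) i‖ ^ 2 : ℝ) : 𝕜) := by
  simpa [conjDiagonal] using star_dotProduct_conjDiagonal_mulVec U 1 x

/-- Weyl's monotonicity principle. By a dimension count some `x ≠ 0` lies both in the span of the
columns of `U` carrying the sorted entries of `p` from position `k` on (dimension `n - k`) and in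
the span of the columns of `V` carrying those of `q` up to position `k` (dimension `k + 1`); then
`sortAsc p k ‖x‖² ≤ xᴴ (U p Uᴴ) x ≤ xᴴ (V q Vᴴ) x ≤ sortAsc q k ‖x‖²`. -/
theorem sortAsc_le_of_conjDiagonal_le {n : ℕ} {U V : unitaryGroup (Fin n) 𝕜} {p q : Fin n → ℝ}
    (h : conjDiagonal U p ≤ conjDiagonal V q) (k : Fin n) : sortAsc p k ≤ sortAsc q k := by
  obtain ⟨x, hx0, hxU, hxV⟩ := exists_ne_zero_mulVec_eq_zero (star (U : Matrix (Fin n) (Fin n) 𝕜))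
    (star (V : Matrix (Fin n) (Fin n) 𝕜)) ((Finset.Iio k).map (Tuple.sort p).toEmbedding)
    ((Finset.Ioi k).map (Tuple.sort q).toEmbedding)
    (by simp only [Finset.card_map, Fin.card_Iio, Fin.card_Ioi, Fintype.card_fin]; omega)
  simp only [Finset.forall_mem_map, Finset.mem_Iio, Finset.mem_Ioi, Equiv.coe_toEmbedding]
    at hxU hxV
  set y := star (U : Matrix (Fin n) (Fin n) 𝕜) *ᵥ x
  set z := star (V : Matrix (Fin n) (Fin n) 𝕜) *ᵥ x
  have hyz : ∑ i, ‖y i‖ ^ 2 = ∑ i, ‖z i‖ ^ 2 := by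
    exact_mod_cast (star_dotProduct_self_eq_sum_norm_sq U x).symm.trans
      (star_dotProduct_self_eq_sum_norm_sq V x)
  have hpos : 0 < ∑ i, ‖y i‖ ^ 2 := by
    have := dotProduct_star_self_pos_iff.2 hx0
    rwa [star_dotProduct_self_eq_sum_norm_sq U, RCLike.ofReal_pos] at this
  have hp : sortAsc p k * ∑ i, ‖y i‖ ^ 2 ≤ ∑ i, p i * ‖y i‖ ^ 2 :=
    sortAsc_mul_sum_le (fun _ => by positivity) fun j hj => by simp [hxU j hj]
  have hq : ∑ i, q i * ‖z i‖ ^ 2 ≤ sortAsc q k * ∑ i, ‖z i‖ ^ 2 :=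
    sum_mul_le_sortAsc_mul_sum (fun _ => by positivity) fun j hj => by simp [hxV j hj]
  have hpq : ∑ i, p i * ‖y i‖ ^ 2 ≤ ∑ i, q i * ‖z i‖ ^ 2 := by
    have := h.dotProduct_mulVec_nonneg x
    rwa [sub_mulVec, dotProduct_sub, star_dotProduct_conjDiagonal_mulVec,
      star_dotProduct_conjDiagonal_mulVec, sub_nonneg, RCLike.ofReal_le_ofReal] at this
  rw [← hyz] at hq
  exact le_of_mul_le_mul_right (hp.trans (hpq.trans hq)) hpos

theorem sortAsc_eq_of_conjDiagonal_eq {n : ℕ} {U V : unitaryGroup (Fin n) 𝕜} {p q : Fin n → ℝ}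
    (h : conjDiagonal U p = conjDiagonal V q) : sortAsc p = sortAsc q :=
  funext fun k => (sortAsc_le_of_conjDiagonal_le h.le k).antisymm
    (sortAsc_le_of_conjDiagonal_le h.ge k)

def permUnitary (σ : Equiv.Perm ι) : unitaryGroup ι 𝕜 :=
  ⟨σ.permMatrix 𝕜, by
    rw [mem_unitaryGroup_iff, star_eq_conjTranspose, conjTranspose_permMatrix, ← permMatrix_mul,
      inv_mul_cancel, permMatrix_one]⟩

theorem conjStarAlgAut_permUnitary_diagonal (σ : Equiv.Perm ι) (d : ι → 𝕜) :
    conjStarAlgAut 𝕜 (Matrix ι ι 𝕜) (permUnitary σ) (diagonal d) = diagonal (d ∘ σ) := by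
  rw [conjStarAlgAut_apply]
  change σ.permMatrix 𝕜 * diagonal d * (σ.permMatrix 𝕜)ᴴ = _
  rw [conjTranspose_permMatrix, PEquiv.toMatrix_toPEquiv_mul, PEquiv.mul_toMatrix_toPEquiv]
  exact submatrix_diagonal_equiv d σ

theorem conjStarAlgAut_conjDiagonal (W U : unitaryGroup ι 𝕜) (d : ι → ℝ) :
    conjStarAlgAut 𝕜 _ W (conjDiagonal U d) = conjDiagonal (W * U) d :=
  (conjStarAlgAut_mul_apply W U _).symm

theorem conjDiagonal_mul_permUnitary (U : unitaryGroup ι 𝕜) (σ : Equiv.Perm ι) (d : ι → ℝ) :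
    conjDiagonal (U * permUnitary σ) d = conjDiagonal U (d ∘ σ) := by
  rw [conjDiagonal, conjDiagonal, conjStarAlgAut_mul_apply, conjStarAlgAut_permUnitary_diagonal]
  rfl

namespace IsHermitian

theorem eq_conjDiagonal {A : Matrix ι ι 𝕜} (hA : A.IsHermitian) :
    A = conjDiagonal hA.eigenvectorUnitary hA.eigenvalues := hA.spectral_theorem

theorem isHermitian_cfc_s6 {A : Matrix ι ι 𝕜} (hA : A.IsHermitian) (f : ℝ → ℝ) :
    (hA.cfc f).IsHermitian :=
  hA.cfc_eq f ▸ (cfc_predicate f A).isHermitian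

theorem cfc_mono {A : Matrix ι ι 𝕜} (hA : A.IsHermitian) {f g : ℝ → ℝ}
    (h : ∀ i, f (hA.eigenvalues i) ≤ g (hA.eigenvalues i)) : hA.cfc f ≤ hA.cfc g :=
  conjDiagonal_mono _ h

theorem cfc_affine {A : Matrix ι ι 𝕜} (hA : A.IsHermitian) (α β : ℝ) :
    hA.cfc (fun x => α * x + β) = α • A + algebraMap ℝ _ β := by
  have := hA.isSelfAdjoint
  rw [← hA.cfc_eq, cfc_add_const β (fun x => α * x) A, cfc_const_mul_id α A]

theorem sortAsc_eigenvalues_cfc {n : ℕ} {A : Matrix (Fin n) (Fin n) 𝕜} (hA : A.IsHermitian)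
    (f : ℝ → ℝ) (hfA : (hA.cfc f).IsHermitian) :
    sortAsc hfA.eigenvalues = sortAsc (f ∘ hA.eigenvalues) :=
  sortAsc_eq_of_conjDiagonal_eq hfA.eq_conjDiagonal.symm

theorem sortAsc_le_of_cfc_le {n : ℕ} {X Y : Matrix (Fin n) (Fin n) 𝕜} (hX : X.IsHermitian)
    (hY : Y.IsHermitian) {f : ℝ → ℝ} (h : hX.cfc f ≤ Y) (k : Fin n) :
    sortAsc (f ∘ hX.eigenvalues) k ≤ sortAsc hY.eigenvalues k :=
  sortAsc_le_of_conjDiagonal_le (hY.eq_conjDiagonal ▸ h) k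

theorem exists_unitary_le_conj {n : ℕ} {X Y : Matrix (Fin n) (Fin n) 𝕜} (hX : X.IsHermitian)
    (hY : Y.IsHermitian) (h : ∀ k, sortAsc hX.eigenvalues k ≤ sortAsc hY.eigenvalues k) :
    ∃ W ∈ unitaryGroup (Fin n) 𝕜, X ≤ W * Y * Wᴴ := by
  -- `σ` matches the `k`-th smallest eigenvalue of `X` with the `k`-th smallest one of `Y`.
  let σ := (Tuple.sort hX.eigenvalues).symm.trans (Tuple.sort hY.eigenvalues)
  let W : unitaryGroup (Fin n) 𝕜 :=
    hX.eigenvectorUnitary * permUnitary σ * star hY.eigenvectorUnitary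
  have hconj : (W : Matrix (Fin n) (Fin n) 𝕜) * Y * (W : Matrix (Fin n) (Fin n) 𝕜)ᴴ =
      conjDiagonal hX.eigenvectorUnitary (hY.eigenvalues ∘ σ) := calc
    _ = conjStarAlgAut 𝕜 _ W (conjDiagonal hY.eigenvectorUnitary hY.eigenvalues) := by
      rw [conjStarAlgAut_apply, star_eq_conjTranspose, ← hY.eq_conjDiagonal]
    _ = conjDiagonal (hX.eigenvectorUnitary * permUnitary σ) hY.eigenvalues := by
      rw [conjStarAlgAut_conjDiagonal]
      simp [W, mul_assoc]
    _ = _ := conjDiagonal_mul_permUnitary _ _ _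
  refine ⟨W, W.2, ?_⟩
  rw [hconj]
  nth_rw 1 [hX.eq_conjDiagonal]
  refine conjDiagonal_mono _ fun i => ?_
  simpa [sortAsc, σ] using h ((Tuple.sort hX.eigenvalues).symm i)

end IsHermitian

section PositiveMap

variable {Φ : Matrix ι ι 𝕜 →ₗ[𝕜] Matrix κ κ 𝕜}

theorem IsHermitian.map_of_map_posSemidef (hΦ : ∀ X, X.PosSemidef → (Φ X).PosSemidef)
    {A : Matrix ι ι 𝕜} (hA : A.IsHermitian) : (Φ A).IsHermitian := by
  rw [← CFC.posPart_sub_negPart A hA.isSelfAdjoint, map_sub]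
  exact (hΦ _ (nonneg_iff_posSemidef.1 (CFC.posPart_nonneg A))).isHermitian.sub
    (hΦ _ (nonneg_iff_posSemidef.1 (CFC.negPart_nonneg A))).isHermitian

variable [Fintype κ] [DecidableEq κ]

theorem map_algebraMap_of_map_one (hΦ1 : Φ 1 = 1) (r : ℝ) :
    Φ (algebraMap ℝ _ r) = algebraMap ℝ _ r := by
  rw [Algebra.algebraMap_eq_smul_one, LinearMap.map_smul_of_tower, hΦ1,
    Algebra.algebraMap_eq_smul_one]

theorem IsHermitian.eigenvalues_map_mem (hΦ : ∀ X, X.PosSemidef → (Φ X).PosSemidef)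
    (hΦ1 : Φ 1 = 1) {I : Set ℝ} (hI : I.OrdConnected) {A : Matrix ι ι 𝕜} (hA : A.IsHermitian)
    (hspec : ∀ i, hA.eigenvalues i ∈ I) (hB : (Φ A).IsHermitian) (i : κ) :
    hB.eigenvalues i ∈ I := by
  have := nonempty_of_map_one hΦ1 i
  obtain ⟨a, ha⟩ := Finite.exists_min hA.eigenvalues
  obtain ⟨b, hb⟩ := Finite.exists_max hA.eigenvalues
  have hlo : algebraMap ℝ _ (hA.eigenvalues a) ≤ A := by
    rw [algebraMap_le_iff_le_spectrum hA.isSelfAdjoint, hA.spectrum_real_eq_range_eigenvalues]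
    rintro _ ⟨j, rfl⟩
    exact ha j
  have hhi : A ≤ algebraMap ℝ _ (hA.eigenvalues b) := by
    rw [le_algebraMap_iff_spectrum_le hA.isSelfAdjoint, hA.spectrum_real_eq_range_eigenvalues]
    rintro _ ⟨j, rfl⟩
    exact hb j
  have hloB := monotone_of_map_posSemidef hΦ hlo
  have hhiB := monotone_of_map_posSemidef hΦ hhi
  rw [map_algebraMap_of_map_one hΦ1, algebraMap_le_iff_le_spectrum hB.isSelfAdjoint] at hloB
  rw [map_algebraMap_of_map_one hΦ1, le_algebraMap_iff_spectrum_le hB.isSelfAdjoint] at hhiB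
  exact hI.out (hspec a) (hspec b) ⟨hloB _ (hB.eigenvalues_mem_spectrum_real i),
    hhiB _ (hB.eigenvalues_mem_spectrum_real i)⟩

end PositiveMap

theorem IsHermitian.sortAsc_affine_le_map_cfc {n : ℕ}
    {Φ : Matrix ι ι 𝕜 →ₗ[𝕜] Matrix (Fin n) (Fin n) 𝕜}
    (hΦ : ∀ X, X.PosSemidef → (Φ X).PosSemidef) (hΦ1 : Φ 1 = 1) {A : Matrix ι ι 𝕜}
    (hA : A.IsHermitian) {f : ℝ → ℝ} {α β : ℝ}
    (hline : ∀ i, α * hA.eigenvalues i + β ≤ f (hA.eigenvalues i)) (hB : (Φ A).IsHermitian)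
    (hY : (Φ (hA.cfc f)).IsHermitian) (k : Fin n) :
    sortAsc ((fun x => α * x + β) ∘ hB.eigenvalues) k ≤ sortAsc hY.eigenvalues k := by
  refine hB.sortAsc_le_of_cfc_le hY ?_ k
  calc hB.cfc (fun x => α * x + β) = Φ (hA.cfc (fun x => α * x + β)) := by
        rw [hB.cfc_affine, hA.cfc_affine, map_add, LinearMap.map_smul_of_tower,
          map_algebraMap_of_map_one hΦ1]
    _ ≤ Φ (hA.cfc f) := monotone_of_map_posSemidef hΦ (hA.cfc_mono hline)

theorem IsHermitian.sortAsc_cfc_map_le {n : ℕ} {Φ : Matrix ι ι 𝕜 →ₗ[𝕜] Matrix (Fin n) (Fin n) 𝕜}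
    (hΦ : ∀ X, X.PosSemidef → (Φ X).PosSemidef) (hΦ1 : Φ 1 = 1) {I : Set ℝ} (hI : Convex ℝ I)
    {f : ℝ → ℝ} (hmono : MonotoneOn f I ∨ AntitoneOn f I) (hconv : ConvexOn ℝ I f)
    {A : Matrix ι ι 𝕜} (hA : A.IsHermitian) (hspec : ∀ i, hA.eigenvalues i ∈ I)
    (hB : (Φ A).IsHermitian) (hY : (Φ (hA.cfc f)).IsHermitian) (k : Fin n) :
    sortAsc (f ∘ hB.eigenvalues) k ≤ sortAsc hY.eigenvalues k := by
  have hBI := hA.eigenvalues_map_mem hΦ hΦ1 hI.ordConnected hspec hB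
  have hminorant (t : ℝ) (ht : t ∈ I) : ∃ α : ℝ, (MonotoneOn f I → 0 ≤ α) ∧
      (AntitoneOn f I → α ≤ 0) ∧ ∀ j, sortAsc ((fun x => α * x + (f t - α * t)) ∘ hB.eigenvalues) j
        ≤ sortAsc hY.eigenvalues j := by
    obtain ⟨y, hy, hsupp⟩ := hconv.exists_slope_support ht hspec
    exact ⟨slope f t y, fun hf => hf.slope_nonneg ht hy, fun hf => hf.slope_nonpos ht hy,
      hA.sortAsc_affine_le_map_cfc hΦ hΦ1 (fun i => by linarith [hsupp i]) hB hY⟩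
  rcases hmono with hf | hf
  · set t := sortAsc hB.eigenvalues k
    obtain ⟨α, hα, -, hle⟩ := hminorant t (hBI _)
    have hL : MonotoneOn (fun x => α * x + (f t - α * t)) Set.univ := fun _ _ _ _ h =>
      add_le_add_left (mul_le_mul_of_nonneg_left h (hα hf)) _
    have := sortAsc_comp_of_monotoneOn hL (d := hB.eigenvalues) (fun _ => trivial) k
    rw [sortAsc_comp_of_monotoneOn hf hBI]
    linarith [hle k]
  · set t := sortAsc hB.eigenvalues k.rev
    obtain ⟨α, -, hα, hle⟩ := hminorant t (hBI _)
    have hL : AntitoneOn (fun x => α * x + (f t - α * t)) Set.univ := fun _ _ _ _ h =>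
      add_le_add_left (mul_le_mul_of_nonpos_left h (hα hf)) _
    have := sortAsc_comp_of_antitoneOn hL (d := hB.eigenvalues) (fun _ => trivial) k
    rw [sortAsc_comp_of_antitoneOn hf hBI]
    linarith [hle k]

end Matrix

theorem hermCFC_of_isHermitian {ι : Type*} [Fintype ι] [DecidableEq ι] {M : Matrix ι ι ℂ}
    (hM : M.IsHermitian) (f : ℝ → ℝ) : hermCFC M f = hM.cfc f :=
  dif_pos hM

theorem eigDesc_of_isHermitian {n : ℕ} {M : Matrix (Fin n) (Fin n) ℂ} (hM : M.IsHermitian)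
    (j : Fin n) : eigDesc M j = sortAsc hM.eigenvalues j.rev := by
  rw [eigDesc, dif_pos hM]; rfl

/-- For a monotone convex `f` on an interval `I`, a positive unital linear map `Φ`, and a
Hermitian `A` with spectrum in `I`: `λⱼ↓(f(Φ(A))) ≤ λⱼ↓(Φ(f(A)))` for every `j`;
equivalently there is a unitary `U` with `f(Φ(A)) ≤ U Φ(f(A)) U*`. -/
theorem stmt6 {m n : ℕ} (I : Set ℝ) (hI : Convex ℝ I) (f : ℝ → ℝ)
    (hmono : MonotoneOn f I ∨ AntitoneOn f I) (hconv : ConvexOn ℝ I f)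
    (Φ : Matrix (Fin m) (Fin m) ℂ →ₗ[ℂ] Matrix (Fin n) (Fin n) ℂ)
    (hpos : ∀ X : Matrix (Fin m) (Fin m) ℂ, X.PosSemidef → (Φ X).PosSemidef)
    (hunital : Φ 1 = 1)
    (A : Matrix (Fin m) (Fin m) ℂ) (hA : A.IsHermitian) (hspec : ∀ i, hA.eigenvalues i ∈ I) :
    (∀ j, eigDesc (hermCFC (Φ A) f) j ≤ eigDesc (Φ (hermCFC A f)) j) ∧
      ∃ U ∈ Matrix.unitaryGroup (Fin n) ℂ,
        loewnerLE (hermCFC (Φ A) f) (U * Φ (hermCFC A f) * Uᴴ) := by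
  have hB := hA.map_of_map_posSemidef hpos
  have hY := (hA.isHermitian_cfc_s6 f).map_of_map_posSemidef hpos
  have hX := hB.isHermitian_cfc_s6 f
  have hle : ∀ k, sortAsc hX.eigenvalues k ≤ sortAsc hY.eigenvalues k := by
    rw [hB.sortAsc_eigenvalues_cfc f hX]
    exact hA.sortAsc_cfc_map_le hpos hunital hI hmono hconv hspec hB hY
  rw [hermCFC_of_isHermitian hB, hermCFC_of_isHermitian hA]
  refine ⟨fun j => ?_, hX.exists_unitary_le_conj hY hle⟩
  rw [eigDesc_of_isHermitian hX, eigDesc_of_isHermitian hY]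
  exact hle j.rev
end

section
/- Let A, B be n×n Hermitian matrices. Then there exist unitary matrices U and V such that |A ∘ B| ≤ (1/2)(U (|A| ∘ |B|) U* + V (|A| ∘ |B|) V*) in the Loewner order, where ∘ denotes the Hadamard (entrywise) product and |X| = (X*X)^{1/2}. -/
/-!
Take `U = 1` and the symmetry `V = 2P - 1`, where `P` is the spectral projection of `C = A ∘ B`
onto its nonnegative eigenvalues. With `Q = 1 - P` and `M = |A| ∘ |B|` one has `|C| = PCP - QCQ`
and `(M + VMV*)/2 = PMP + QMQ`, so the difference is `P(M - C)P + Q(M + C)Q`. Both `M - C` and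
`M + C` are positive by the Schur product theorem: writing `A = A⁺ - A⁻`, `|A| = A⁺ + A⁻` and
likewise for `B`, one gets `M - C = 2(A⁺ ∘ B⁻ + A⁻ ∘ B⁺)` and `M + C = 2(A⁺ ∘ B⁺ + A⁻ ∘ B⁻)`.
-/

open Matrix
open scoped ComplexOrder Kronecker

open scoped MatrixOrder

lemma inv_two_smul_add_conj_eq {R : Type*} [Ring R] [Module ℂ R] (p m : R) :
    (2 : ℂ)⁻¹ • (m + (2 * p - 1) * m * (2 * p - 1)) = p * m * p + (1 - p) * m * (1 - p) := by
  rw [inv_smul_eq_iff₀ two_ne_zero, two_smul]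
  noncomm_ring

namespace Matrix

section Hadamard

variable {ι : Type*}

lemma hadamard_nonneg {A B : Matrix ι ι ℂ} (hA : 0 ≤ A) (hB : 0 ≤ B) : 0 ≤ A ⊙ B :=
  nonneg_iff_posSemidef.2 <| (nonneg_iff_posSemidef.1 hA).hadamard (nonneg_iff_posSemidef.1 hB)

lemma add_hadamard_add_sub_sub_hadamard_sub (P N Q M : Matrix ι ι ℂ) :
    (P + N) ⊙ (Q + M) - (P - N) ⊙ (Q - M) = (P ⊙ M + N ⊙ Q) + (P ⊙ M + N ⊙ Q) := by
  ext i j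
  simp only [sub_apply, add_apply, hadamard_apply]
  ring

lemma add_hadamard_add_add_sub_hadamard_sub (P N Q M : Matrix ι ι ℂ) :
    (P + N) ⊙ (Q + M) + (P - N) ⊙ (Q - M) = (P ⊙ Q + N ⊙ M) + (P ⊙ Q + N ⊙ M) := by
  ext i j
  simp only [sub_apply, add_apply, hadamard_apply]
  ring

lemma sub_hadamard_sub_le_add_hadamard_add {P N Q M : Matrix ι ι ℂ}
    (hP : 0 ≤ P) (hN : 0 ≤ N) (hQ : 0 ≤ Q) (hM : 0 ≤ M) :
    (P - N) ⊙ (Q - M) ≤ (P + N) ⊙ (Q + M) := by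
  rw [← sub_nonneg, add_hadamard_add_sub_sub_hadamard_sub]
  have h := add_nonneg (hadamard_nonneg hP hM) (hadamard_nonneg hN hQ)
  exact add_nonneg h h

lemma neg_add_hadamard_add_le_sub_hadamard_sub {P N Q M : Matrix ι ι ℂ}
    (hP : 0 ≤ P) (hN : 0 ≤ N) (hQ : 0 ≤ Q) (hM : 0 ≤ M) :
    -((P + N) ⊙ (Q + M)) ≤ (P - N) ⊙ (Q - M) := by
  rw [neg_le_iff_add_nonneg', add_hadamard_add_add_sub_hadamard_sub]
  have h := add_nonneg (hadamard_nonneg hP hQ) (hadamard_nonneg hN hM)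
  exact add_nonneg h h

end Hadamard

variable {ι : Type*} [Fintype ι] [DecidableEq ι]

lemma hadamard_le_cfcAbs_hadamard_cfcAbs {A B : Matrix ι ι ℂ} (hA : A.IsHermitian)
    (hB : B.IsHermitian) : A ⊙ B ≤ CFC.abs A ⊙ CFC.abs B := by
  have h := sub_hadamard_sub_le_add_hadamard_add (CFC.posPart_nonneg A) (CFC.negPart_nonneg A)
    (CFC.posPart_nonneg B) (CFC.negPart_nonneg B)
  rwa [CFC.posPart_sub_negPart A hA.isSelfAdjoint, CFC.posPart_sub_negPart B hB.isSelfAdjoint,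
    CFC.posPart_add_negPart A hA.isSelfAdjoint, CFC.posPart_add_negPart B hB.isSelfAdjoint] at h

lemma neg_cfcAbs_hadamard_cfcAbs_le_hadamard {A B : Matrix ι ι ℂ} (hA : A.IsHermitian)
    (hB : B.IsHermitian) : -(CFC.abs A ⊙ CFC.abs B) ≤ A ⊙ B := by
  have h := neg_add_hadamard_add_le_sub_hadamard_sub (CFC.posPart_nonneg A)
    (CFC.negPart_nonneg A) (CFC.posPart_nonneg B) (CFC.negPart_nonneg B)
  rwa [CFC.posPart_sub_negPart A hA.isSelfAdjoint, CFC.posPart_sub_negPart B hB.isSelfAdjoint,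
    CFC.posPart_add_negPart A hA.isSelfAdjoint, CFC.posPart_add_negPart B hB.isSelfAdjoint] at h

lemma continuousOn_spectrum_real (A : Matrix ι ι ℂ) (f : ℝ → ℝ) :
    ContinuousOn f (spectrum ℝ A) :=
  A.finite_real_spectrum.continuousOn f

noncomputable def nonnegSpectralProj (C : Matrix ι ι ℂ) : Matrix ι ι ℂ :=
  cfc (fun x : ℝ => if 0 ≤ x then 1 else 0) C

lemma isStarProjection_nonnegSpectralProj (C : Matrix ι ι ℂ) :
    IsStarProjection (nonnegSpectralProj C) where
  isIdempotentElem := by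
    rw [IsIdempotentElem, nonnegSpectralProj, ← cfc_mul (hf := C.continuousOn_spectrum_real _)
      (hg := C.continuousOn_spectrum_real _)]
    refine cfc_congr fun x _ => ?_
    split_ifs <;> simp
  isSelfAdjoint := cfc_predicate _ _

lemma cfcAbs_eq_nonnegSpectralProj {C : Matrix ι ι ℂ} (hC : C.IsHermitian) :
    CFC.abs C = nonnegSpectralProj C * C * nonnegSpectralProj C -
      (1 - nonnegSpectralProj C) * C * (1 - nonnegSpectralProj C) := by
  have hc := C.continuousOn_spectrum_real
  set p : ℝ → ℝ := fun x => if 0 ≤ x then 1 else 0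
  calc CFC.abs C = cfc (‖·‖) C := CFC.abs_eq_cfc_norm C hC.isSelfAdjoint
    _ = cfc (fun x => p x * x * p x - (1 - p x) * x * (1 - p x)) C := by
      refine cfc_congr fun x _ => ?_
      by_cases hx : 0 ≤ x
      · simp [p, hx, abs_of_nonneg hx]
      · simp [p, hx, abs_of_neg (not_le.1 hx)]
    _ = _ := by
      rw [cfc_sub (hf := hc _) (hg := hc _), cfc_mul (hf := hc _) (hg := hc _),
        cfc_mul (hf := hc _) (hg := hc _), cfc_mul (hf := hc _) (hg := hc _),
        cfc_mul (hf := hc _) (hg := hc _), cfc_sub (hf := hc _) (hg := hc _), cfc_const_one ℝ C,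
        cfc_id' ℝ C]
      rfl

theorem exists_unitary_cfcAbs_le_inv_two_smul_add_conj {C M : Matrix ι ι ℂ} (hC : C.IsHermitian)
    (hCM : C ≤ M) (hMC : -M ≤ C) :
    ∃ U ∈ unitaryGroup ι ℂ, CFC.abs C ≤ (2 : ℂ)⁻¹ • (M + U * M * Uᴴ) := by
  set P := nonnegSpectralProj C
  have hP := isStarProjection_nonnegSpectralProj C
  have hPstar : star P = P := hP.isSelfAdjoint.star_eq
  have hQstar : star (1 - P) = 1 - P := hP.one_sub.isSelfAdjoint.star_eq
  refine ⟨2 * P - 1, hP.two_mul_sub_one_mem_unitary, ?_⟩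
  have hVstar : (2 * P - 1)ᴴ = 2 * P - 1 := by
    rw [← star_eq_conjTranspose, star_sub, star_mul, hPstar, star_one, star_ofNat]
    noncomm_ring
  rw [hVstar, inv_two_smul_add_conj_eq, cfcAbs_eq_nonnegSpectralProj hC, ← sub_nonneg]
  have hconj : P * M * P + (1 - P) * M * (1 - P) - (P * C * P - (1 - P) * C * (1 - P)) =
      P * (M - C) * star P + (1 - P) * (M + C) * star (1 - P) := by
    rw [hPstar, hQstar]
    noncomm_ring
  rw [hconj]
  exact add_nonneg (star_right_conjugate_nonneg (sub_nonneg.2 hCM) P)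
    (star_right_conjugate_nonneg (neg_le_iff_add_nonneg'.1 hMC) (1 - P))

end Matrix

lemma loewnerLE_iff_le {n : ℕ} {X Y : Matrix (Fin n) (Fin n) ℂ} : loewnerLE X Y ↔ X ≤ Y :=
  Iff.rfl

lemma matAbs_eq_cfcAbs {n : ℕ} (X : Matrix (Fin n) (Fin n) ℂ) : matAbs X = CFC.abs X := by
  rw [CFC.abs, CFC.sqrt_eq_real_sqrt _ (star_mul_self_nonneg X), cfcₙ_eq_cfc,
    star_eq_conjTranspose, IsHermitian.cfc_eq, IsHermitian.cfc, Unitary.conjStarAlgAut_apply]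
  rfl

/-- For Hermitian `A, B` there are unitaries `U, V` with
`|A ∘ B| ≤ (1/2)(U (|A| ∘ |B|) U* + V (|A| ∘ |B|) V*)` in the Loewner order,
where `∘` is the Hadamard product. -/
theorem stmt9 {n : ℕ} (A B : Matrix (Fin n) (Fin n) ℂ)
    (hA : A.IsHermitian) (hB : B.IsHermitian) :
    ∃ U V : Matrix (Fin n) (Fin n) ℂ,
      U ∈ Matrix.unitaryGroup (Fin n) ℂ ∧ V ∈ Matrix.unitaryGroup (Fin n) ℂ ∧
      loewnerLE (matAbs (A ⊙ B))
        ((2 : ℂ)⁻¹ • (U * (matAbs A ⊙ matAbs B) * Uᴴ + V * (matAbs A ⊙ matAbs B) * Vᴴ)) := by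
  simp only [matAbs_eq_cfcAbs, loewnerLE_iff_le]
  obtain ⟨V, hV, hle⟩ := exists_unitary_cfcAbs_le_inv_two_smul_add_conj (hA.hadamard hB)
    (hadamard_le_cfcAbs_hadamard_cfcAbs hA hB) (neg_cfcAbs_hadamard_cfcAbs_le_hadamard hA hB)
  refine ⟨1, V, one_mem _, hV, ?_⟩
  simpa using hle
end

section
/- Let A, B be n×n positive semidefinite complex matrices. Then there exists a unitary matrix U such that |AB| ≤ U ((A² + B²)/2) U* in the Loewner order. -/
/-!
Let `s₁ ≤ ⋯ ≤ sₙ` be the eigenvalues of `|AB|` and `t₁ ≤ ⋯ ≤ tₙ` those of `A² + B²`. It suffices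
to show `2 sⱼ ≤ tⱼ` for every `j`: a unitary carrying an eigenbasis of `A² + B²` to one of `|AB|`,
with the eigenvalues matched in order, then conjugates `A² + B²` above `2 |AB|`.

Fix `j` with `sⱼ > 0`, and take orthonormal eigenvectors `vᵢ` of `|AB|` for the eigenvalues
`sᵢ ≥ sⱼ` and `bₖ` of `A² + B²` for the eigenvalues `tₖ ≤ tⱼ`. As `|AB|² = (AB)ᴴ(AB)`, the vectors
`fᵢ = AB vᵢ / sᵢ` are orthonormal as well. There are more than `n` vectors `vᵢ`, `bₖ` in all, so a
dimension count gives `u = ∑ cᵢ fᵢ` and `v = ∑ cᵢ vᵢ ≠ 0` with `w = Au + Bv` in the span of the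
`bₖ`. Then `4 sⱼ ‖v‖² ≤ 4 Re⟪Au, Bv⟫ ≤ ‖w‖²`, while
`‖w‖² = Re⟪u, Aw⟫ + Re⟪v, Bw⟫ ≤ ‖v‖ (‖Aw‖ + ‖Bw‖)` and `‖Aw‖² + ‖Bw‖² = ⟪w, (A² + B²) w⟫ ≤ tⱼ ‖w‖²`,
which together give `‖w‖² ≤ 2 tⱼ ‖v‖²`.
-/

open Matrix
open scoped ComplexOrder Kronecker

open scoped InnerProductSpace
open RCLike Finset

section
variable {𝕜 E : Type*} [RCLike 𝕜] [NormedAddCommGroup E] [InnerProductSpace 𝕜 E]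

theorem two_mul_le_of_re_inner_le {A B : E →ₗ[𝕜] E} (hA : A.IsSymmetric) (hB : B.IsSymmetric)
    {u v : E} {c τ : ℝ} (hc : 0 < c) (hv : v ≠ 0) (huv : ‖u‖ = ‖v‖)
    (hcross : c * ‖v‖ ^ 2 ≤ re ⟪u, A (B v)⟫_𝕜)
    (hτ : ‖A (A u + B v)‖ ^ 2 + ‖B (A u + B v)‖ ^ 2 ≤ τ * ‖A u + B v‖ ^ 2) :
    2 * c ≤ τ := by
  set w := A u + B v
  have hlower : 4 * re ⟪u, A (B v)⟫_𝕜 ≤ ‖w‖ ^ 2 := by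
    have := norm_sub_sq (𝕜 := 𝕜) (A u) (B v)
    rw [norm_add_sq (𝕜 := 𝕜), ← hA]
    nlinarith [norm_nonneg (A u - B v)]
  have hupper : ‖w‖ ^ 2 ≤ ‖v‖ * (‖A w‖ + ‖B w‖) := by
    calc ‖w‖ ^ 2 = re ⟪u, A w⟫_𝕜 + re ⟪v, B w⟫_𝕜 := by
          rw [← inner_self_eq_norm_sq (𝕜 := 𝕜), ← hA, ← hB, ← map_add, ← inner_add_left]
      _ ≤ ‖u‖ * ‖A w‖ + ‖v‖ * ‖B w‖ := add_le_add (re_inner_le_norm _ _) (re_inner_le_norm _ _)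
      _ = _ := by rw [huv, mul_add]
  have hv0 : 0 < ‖v‖ := norm_pos_iff.mpr hv
  have hcv : 0 < c * ‖v‖ ^ 2 := by positivity
  have hpos : 0 < ‖w‖ ^ 2 := by linarith
  have hsq : ‖w‖ ^ 2 ≤ 2 * τ * ‖v‖ ^ 2 := by
    have : (‖w‖ ^ 2) * ‖w‖ ^ 2 ≤ (2 * τ * ‖v‖ ^ 2) * ‖w‖ ^ 2 := by
      nlinarith [sq_nonneg (‖A w‖ - ‖B w‖), norm_nonneg (A w), norm_nonneg (B w)]
    exact le_of_mul_le_mul_right this hpos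
  have : (2 * c) * (2 * ‖v‖ ^ 2) ≤ τ * (2 * ‖v‖ ^ 2) := by linarith
  exact le_of_mul_le_mul_right this (by positivity)

theorem Orthonormal.re_inner_sum_smul {ι : Type*} [Fintype ι] {e : ι → E} (he : Orthonormal 𝕜 e)
    (l : ι → 𝕜) (μ : ι → ℝ) :
    re ⟪∑ i, l i • e i, ∑ i, ((μ i : 𝕜) * l i) • e i⟫_𝕜 = ∑ i, μ i * ‖l i‖ ^ 2 := by
  rw [he.inner_sum, map_sum]
  refine Finset.sum_congr rfl fun i _ => ?_
  rw [mul_left_comm, RCLike.conj_mul, ← ofReal_pow, ← ofReal_mul, ofReal_re]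

theorem Orthonormal.norm_sum_smul_sq {ι : Type*} [Fintype ι] {e : ι → E} (he : Orthonormal 𝕜 e)
    (l : ι → 𝕜) : ‖∑ i, l i • e i‖ ^ 2 = ∑ i, ‖l i‖ ^ 2 := by
  simpa using he.re_inner_sum_smul l 1

theorem Orthonormal.inv_smul_apply_of_eigenvectors {ι : Type*} {T G : E →ₗ[𝕜] E}
    (hTG : ∀ x y, ⟪T x, T y⟫_𝕜 = ⟪G x, G y⟫_𝕜) {v : ι → E} (hv : Orthonormal 𝕜 v) {s : ι → ℝ}
    (hGv : ∀ i, G (v i) = (s i : 𝕜) • v i) (hs : ∀ i, s i ≠ 0) :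
    Orthonormal 𝕜 fun i => (s i : 𝕜)⁻¹ • T (v i) := by
  classical
  rw [orthonormal_iff_ite] at hv ⊢
  intro i k
  rw [inner_smul_left, inner_smul_right, hTG, hGv, hGv, inner_smul_left, inner_smul_right, hv]
  split_ifs with h
  · subst h
    simp only [conj_ofReal, map_inv₀, mul_one]
    field_simp [ofReal_ne_zero.mpr (hs i)]
  · simp

theorem two_mul_le_of_orthonormal [FiniteDimensional 𝕜 E] {ι κ : Type*} [Fintype ι] [Fintype κ]
    {A B : E →ₗ[𝕜] E} (hA : A.IsSymmetric) (hB : B.IsSymmetric)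
    {v f : ι → E} (hv : Orthonormal 𝕜 v) (hf : Orthonormal 𝕜 f) {s : ι → ℝ}
    (hABv : ∀ i, A (B (v i)) = (s i : 𝕜) • f i)
    {b : κ → E} (hb : Orthonormal 𝕜 b) {t : κ → ℝ}
    (hSb : ∀ j, A (A (b j)) + B (B (b j)) = (t j : 𝕜) • b j)
    {c τ : ℝ} (hc : 0 < c) (hs : ∀ i, c ≤ s i) (ht : ∀ j, t j ≤ τ)
    (hcard : Module.finrank 𝕜 E < Fintype.card ι + Fintype.card κ) : 2 * c ≤ τ := by
  let L : (ι → 𝕜) × (κ → 𝕜) →ₗ[𝕜] E :=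
    (A ∘ₗ Fintype.linearCombination 𝕜 f + B ∘ₗ Fintype.linearCombination 𝕜 v).coprod
      (-Fintype.linearCombination 𝕜 b)
  have hker : LinearMap.ker L ≠ ⊥ :=
    LinearMap.ker_ne_bot_of_finrank_lt (by simpa [Module.finrank_prod] using hcard)
  obtain ⟨⟨l, d⟩, hld, hne⟩ := Submodule.exists_mem_ne_zero_of_ne_bot hker
  have hw : A (∑ i, l i • f i) + B (∑ i, l i • v i) = ∑ j, d j • b j := by
    simpa [L, Fintype.linearCombination_apply, add_neg_eq_zero] using hld
  have hl : ∑ i, l i • v i ≠ 0 := by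
    intro h0
    have hl0 : l = 0 := funext (Fintype.linearIndependent_iff.mp hv.linearIndependent l h0)
    have hd0 : d = 0 := by
      subst hl0
      simp only [Pi.zero_apply, zero_smul, Finset.sum_const_zero, map_zero, add_zero] at hw
      exact funext (Fintype.linearIndependent_iff.mp hb.linearIndependent d hw.symm)
    exact hne (by simp [hl0, hd0])
  refine two_mul_le_of_re_inner_le (u := ∑ i, l i • f i) hA hB hc hl ?_ ?_ ?_
  · rw [← sq_eq_sq₀ (norm_nonneg _) (norm_nonneg _), hf.norm_sum_smul_sq, hv.norm_sum_smul_sq]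
  · have : A (B (∑ i, l i • v i)) = ∑ i, ((s i : 𝕜) * l i) • f i := by
      simp [map_sum, hABv, smul_smul, mul_comm]
    rw [this, hf.re_inner_sum_smul, hv.norm_sum_smul_sq, Finset.mul_sum]
    exact Finset.sum_le_sum fun i _ => mul_le_mul_of_nonneg_right (hs i) (by positivity)
  · rw [hw]
    set w := ∑ j, d j • b j
    have hSw : A (A w) + B (B w) = ∑ j, ((t j : 𝕜) * d j) • b j := by
      simp [w, map_sum, ← Finset.sum_add_distrib, ← smul_add, hSb, smul_smul, mul_comm]
    calc ‖A w‖ ^ 2 + ‖B w‖ ^ 2 = re ⟪w, A (A w) + B (B w)⟫_𝕜 := by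
          rw [inner_add_right, map_add, ← hA, ← hB, inner_self_eq_norm_sq, inner_self_eq_norm_sq]
      _ = ∑ j, t j * ‖d j‖ ^ 2 := by rw [hSw, hb.re_inner_sum_smul]
      _ ≤ τ * ‖w‖ ^ 2 := by
          rw [hb.norm_sum_smul_sq, Finset.mul_sum]
          exact Finset.sum_le_sum fun j _ => mul_le_mul_of_nonneg_right (ht j) (by positivity)
end

section
variable {𝕜 ι : Type*} [RCLike 𝕜] [Fintype ι] [DecidableEq ι]

theorem Matrix.IsHermitian.toEuclideanLin_eigenvectorBasis {M : Matrix ι ι 𝕜}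
    (hM : M.IsHermitian) (i : ι) :
    M.toEuclideanLin (hM.eigenvectorBasis i) = (hM.eigenvalues i : 𝕜) • hM.eigenvectorBasis i := by
  rw [toLpLin_apply, hM.mulVec_eigenvectorBasis, ← RCLike.real_smul_eq_coe_smul (K := 𝕜)]
  rfl

theorem Matrix.inner_toEuclideanLin_toEuclideanLin (M : Matrix ι ι 𝕜) (x y : EuclideanSpace 𝕜 ι) :
    ⟪M.toEuclideanLin x, M.toEuclideanLin y⟫_𝕜 = ⟪x, (Mᴴ * M).toEuclideanLin y⟫_𝕜 := by
  rw [toLpLin_mul_same, LinearMap.comp_apply, toEuclideanLin_conjTranspose_eq_adjoint,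
    LinearMap.adjoint_inner_right]

theorem Matrix.IsHermitian.posSemidef_sq {M : Matrix ι ι 𝕜} (hM : M.IsHermitian) :
    (M ^ 2).PosSemidef := by
  simpa only [sq, hM.eq] using posSemidef_conjTranspose_mul_self M
end

section
variable {n : ℕ}

theorem Matrix.star_submatrix_mul_mul_submatrix {α m : Type*} [NonUnitalNonAssocSemiring α]
    [StarRing α] [Fintype m] (M N : Matrix m m α) (e : m ≃ m) :
    star (M.submatrix id e) * N * M.submatrix id e = (star M * N * M).submatrix e e := by
  ext i k
  simp [mul_apply]

theorem matAbs_posSemidef (X : Matrix (Fin n) (Fin n) ℂ) : (matAbs X).PosSemidef :=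
  PosSemidef.mul_mul_conjTranspose_same
    (PosSemidef.diagonal fun _ => Complex.zero_le_real.mpr (Real.sqrt_nonneg _)) _

theorem matAbs_conjTranspose_mul_self (X : Matrix (Fin n) (Fin n) ℂ) :
    (matAbs X)ᴴ * matAbs X = Xᴴ * X := by
  rw [(matAbs_posSemidef X).1.eq, matAbs]
  set h := (posSemidef_conjTranspose_mul_self X).1
  set U : Matrix (Fin n) (Fin n) ℂ := (h.eigenvectorUnitary : Matrix (Fin n) (Fin n) ℂ)
  have hU : star U * U = 1 := Unitary.coe_star_mul_self _
  have hD : diagonal (((↑) ∘ (√·) ∘ h.eigenvalues : Fin n → ℂ)) *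
      diagonal (((↑) ∘ (√·) ∘ h.eigenvalues : Fin n → ℂ)) =
      diagonal (RCLike.ofReal ∘ h.eigenvalues) := by
    rw [diagonal_mul_diagonal]
    congr 1
    funext i
    simp [← Complex.ofReal_mul,
      Real.mul_self_sqrt ((posSemidef_conjTranspose_mul_self X).eigenvalues_nonneg i)]
  conv_rhs => rw [h.spectral_theorem, Unitary.conjStarAlgAut_apply, ← hD]
  simp only [Matrix.mul_assoc]
  rw [← Matrix.mul_assoc (star U), hU, Matrix.one_mul]

theorem inner_toEuclideanLin_matAbs (X : Matrix (Fin n) (Fin n) ℂ)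
    (x y : EuclideanSpace ℂ (Fin n)) :
    ⟪(matAbs X).toEuclideanLin x, (matAbs X).toEuclideanLin y⟫_ℂ =
      ⟪X.toEuclideanLin x, X.toEuclideanLin y⟫_ℂ := by
  rw [inner_toEuclideanLin_toEuclideanLin, inner_toEuclideanLin_toEuclideanLin,
    matAbs_conjTranspose_mul_self]

theorem Tuple.sub_le_card_filter_sort_le {α : Type*} [LinearOrder α] (f : Fin n → α) (j : Fin n) :
    n - j ≤ #{i | f (Tuple.sort f j) ≤ f i} := by
  rw [← Fin.card_Ici]
  refine Finset.card_le_card_of_injOn (Tuple.sort f) (fun k hk => ?_) (Tuple.sort f).injective.injOn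
  simpa using Tuple.monotone_sort f (Finset.mem_Ici.mp hk)

theorem Tuple.succ_le_card_filter_le_sort {α : Type*} [LinearOrder α] (f : Fin n → α) (j : Fin n) :
    j + 1 ≤ #{i | f i ≤ f (Tuple.sort f j)} := by
  rw [← Fin.card_Iic]
  refine Finset.card_le_card_of_injOn (Tuple.sort f) (fun k hk => ?_) (Tuple.sort f).injective.injOn
  simpa using Tuple.monotone_sort f (Finset.mem_Iic.mp hk)

theorem two_mul_eigAsc_matAbs_mul_le {A B : Matrix (Fin n) (Fin n) ℂ} (hA : A.IsHermitian)
    (hB : B.IsHermitian) (j : Fin n) :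
    2 * eigAsc (matAbs (A * B)) j ≤ eigAsc (A ^ 2 + B ^ 2) j := by
  have hG := (matAbs_posSemidef (A * B)).1
  have hS := hA.posSemidef_sq.add hB.posSemidef_sq
  rw [eigAsc, eigAsc, dif_pos hG, dif_pos hS.1]
  set s := hG.eigenvalues
  set t := hS.1.eigenvalues
  rcases le_or_gt (s (Tuple.sort s j)) 0 with hc | hc
  · linarith [hS.eigenvalues_nonneg (Tuple.sort t j)]
  let I : Finset (Fin n) := {i | s (Tuple.sort s j) ≤ s i}
  let J : Finset (Fin n) := {i | t i ≤ t (Tuple.sort t j)}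
  have hsI (i : I) : s (Tuple.sort s j) ≤ s i := (Finset.mem_filter.mp i.2).2
  have htJ (i : J) : t i ≤ t (Tuple.sort t j) := (Finset.mem_filter.mp i.2).2
  refine two_mul_le_of_orthonormal (isSymmetric_toEuclideanLin_iff.mpr hA)
    (isSymmetric_toEuclideanLin_iff.mpr hB)
    (hG.eigenvectorBasis.orthonormal.comp _ Subtype.val_injective)
    (f := fun i : I => (s i : ℂ)⁻¹ • (A.toEuclideanLin ∘ₗ B.toEuclideanLin) (hG.eigenvectorBasis i))
    ?_ ?_ (hS.1.eigenvectorBasis.orthonormal.comp _ Subtype.val_injective) ?_ hc hsI htJ ?_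
  · refine Orthonormal.inv_smul_apply_of_eigenvectors (fun x y => ?_)
      (hG.eigenvectorBasis.orthonormal.comp _ Subtype.val_injective)
      (fun i => hG.toEuclideanLin_eigenvectorBasis i) (fun i => (hc.trans_le (hsI i)).ne')
    rw [← toLpLin_mul_same, inner_toEuclideanLin_matAbs]
  · intro i
    have hsi : (s i : ℂ) ≠ 0 := Complex.ofReal_ne_zero.mpr (hc.trans_le (hsI i)).ne'
    simp [smul_smul, hsi]
  · intro i
    convert hS.1.toEuclideanLin_eigenvectorBasis (i : Fin n) using 1
    · simp [sq]
    · rfl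
  · have := Tuple.sub_le_card_filter_sort_le s j
    have := Tuple.succ_le_card_filter_le_sort t j
    simp only [finrank_euclideanSpace_fin, Fintype.card_coe, I, J]
    omega

theorem exists_unitary_loewnerLE_smul_conj {G S : Matrix (Fin n) (Fin n) ℂ} (hG : G.IsHermitian)
    (hS : S.IsHermitian) {r : ℝ} (h : ∀ j, eigAsc G j ≤ r * eigAsc S j) :
    ∃ U ∈ unitaryGroup (Fin n) ℂ, loewnerLE G ((r : ℂ) • (U * S * Uᴴ)) := by
  rw [eigAsc, eigAsc, dif_pos hG, dif_pos hS] at h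
  set s := hG.eigenvalues
  set t := hS.eigenvalues
  let φ := (Tuple.sort s).symm.trans (Tuple.sort t)
  have hφ (i : Fin n) : s i ≤ r * t (φ i) := by simpa [φ] using h ((Tuple.sort s).symm i)
  set V : Matrix (Fin n) (Fin n) ℂ := (hG.eigenvectorUnitary : Matrix (Fin n) (Fin n) ℂ)
  set W₀ : Matrix (Fin n) (Fin n) ℂ := (hS.eigenvectorUnitary : Matrix (Fin n) (Fin n) ℂ)
  let W := W₀.submatrix id φ
  have hSW₀ : star W₀ * S * W₀ = diagonal (RCLike.ofReal ∘ t) := by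
    simpa [Unitary.conjStarAlgAut_star_apply] using hS.conjStarAlgAut_star_eigenvectorUnitary
  have hSW : star W * S * W = diagonal (fun i => (t (φ i) : ℂ)) := by
    rw [star_submatrix_mul_mul_submatrix, hSW₀, submatrix_diagonal_equiv]
    rfl
  have hW : W ∈ unitaryGroup (Fin n) ℂ := by
    rw [mem_unitaryGroup_iff', ← Matrix.mul_one (star W), star_submatrix_mul_mul_submatrix,
      Matrix.mul_one, Unitary.coe_star_mul_self, submatrix_one_equiv]
  have hGV : G = V * diagonal (RCLike.ofReal ∘ s) * star V := by
    simpa [Unitary.conjStarAlgAut_apply] using hG.spectral_theorem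
  refine ⟨V * star W, Submonoid.mul_mem _ hG.eigenvectorUnitary.2 (Unitary.star_mem hW), ?_⟩
  have hdiff : (r : ℂ) • (V * star W * S * (V * star W)ᴴ) - G =
      V * diagonal (fun i => ((r * t (φ i) - s i : ℝ) : ℂ)) * Vᴴ := by
    have hconj : V * star W * S * (V * star W)ᴴ = V * (star W * S * W) * star V := by
      rw [← star_eq_conjTranspose, star_mul, star_star]
      simp only [Matrix.mul_assoc]
    have hD : diagonal (fun i => ((r * t (φ i) - s i : ℝ) : ℂ)) =
        (r : ℂ) • diagonal (fun i => (t (φ i) : ℂ)) - diagonal (RCLike.ofReal ∘ s) := by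
      ext i k
      rcases eq_or_ne i k with rfl | hik
      · simp
      · simp [hik]
    rw [hconj, hSW, hGV, hD, Matrix.mul_sub, Matrix.sub_mul, Matrix.mul_smul, Matrix.smul_mul]
    rfl
  rw [loewnerLE, hdiff]
  exact PosSemidef.mul_mul_conjTranspose_same
    (PosSemidef.diagonal fun i => Complex.zero_le_real.mpr (sub_nonneg.mpr (hφ i))) V

end

/-- Bhatia–Kittaneh: for positive semidefinite `A, B` there is a unitary `U` with
`|AB| ≤ U ((A² + B²)/2) U*` in the Loewner order. -/
theorem stmt17 {n : ℕ} (A B : Matrix (Fin n) (Fin n) ℂ)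
    (hA : A.PosSemidef) (hB : B.PosSemidef) :
    ∃ U ∈ Matrix.unitaryGroup (Fin n) ℂ,
      loewnerLE (matAbs (A * B)) ((2 : ℂ)⁻¹ • (U * (A ^ 2 + B ^ 2) * Uᴴ)) := by
  obtain ⟨U, hU, hle⟩ := exists_unitary_loewnerLE_smul_conj (matAbs_posSemidef (A * B)).1
    (hA.1.posSemidef_sq.add hB.1.posSemidef_sq).1 (r := 2⁻¹)
    fun j => by linarith [two_mul_eigAsc_matAbs_mul_le hA.1 hB.1 j]
  exact ⟨U, hU, by simpa using hle⟩
end
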